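/- If S is the pinnacle set of some permutation π ∈ S_n (in particular n > 2|S|), then the canonical permutation Id_S ∈ S_n has pinnacle set exactly S. -/

import Mathlib

/-- The block reversal: reverses the block of `π` between positions `a` and `b`. -/
def rev (π : ℕ → ℕ) (a b : ℕ) : ℕ → ℕ := fun i =>
  if a ≤ i ∧ i ≤ b then π (a + b - i) else π i

/-- Position `i` holds a pinnacle: `π (i-1) < π i > π (i+1)`. -/
def PinAt (π : ℕ → ℕ) (i : ℕ) : Prop := π (i - 1) < π i ∧ π (i + 1) < π i

/-- Position `i` holds a dell: `π (i-1) > π i < π (i+1)`. -/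
def DellAt (π : ℕ → ℕ) (i : ℕ) : Prop := π i < π (i - 1) ∧ π i < π (i + 1)

/-- Position `i` is ascending: its element belongs to an ascending set of `π`. -/
def AscAt (π : ℕ → ℕ) (i : ℕ) : Prop := π (i - 1) < π i ∧ π i < π (i + 1)

/-- Position `i` is descending: its element belongs to a descending set of `π`. -/
def DescAt (π : ℕ → ℕ) (i : ℕ) : Prop := π i < π (i - 1) ∧ π (i + 1) < π i

/-- The pinnacle set of `π ∈ S_n`, as a finset of values. -/
def pinFinset (n : ℕ) (π : ℕ → ℕ) : Finset ℕ :=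
  ((Finset.Icc 1 n).filter fun i => π (i - 1) < π i ∧ π (i + 1) < π i).image π

/-- The reversal with endpoints at positions `a ≤ b` is balanced for `π`:
it does not modify the pinnacle set. -/
def BalancedRev (n : ℕ) (π : ℕ → ℕ) (a b : ℕ) : Prop :=
  pinFinset n (rev π a b) = pinFinset n π

/-- Apply a sequence of reversals (each given by its pair of positions). -/
def applySeq (π : ℕ → ℕ) : List (ℕ × ℕ) → ℕ → ℕ
  | [] => π
  | ab :: L => applySeq (rev π ab.1 ab.2) L

/-- Every reversal of the sequence is balanced for the permutation to which
it is applied. -/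
def IsBalancedSeq (n : ℕ) (π : ℕ → ℕ) : List (ℕ × ℕ) → Prop
  | [] => True
  | ab :: L => 1 ≤ ab.1 ∧ ab.1 ≤ ab.2 ∧ ab.2 ≤ n ∧ BalancedRev n π ab.1 ab.2 ∧
      IsBalancedSeq n (rev π ab.1 ab.2) L

/-- `π` is the extension of a permutation of `{1,…,n}` by the boundary values
`π 0 = n+1` and `π (n+1) = n+2`. -/
def IsExtPerm (n : ℕ) (π : ℕ → ℕ) : Prop :=
  Set.BijOn π (Set.Icc 1 n) (Set.Icc 1 n) ∧ π 0 = n + 1 ∧ π (n + 1) = n + 2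

/-- The positions of the pinnacles of `π`, from left to right. -/
def pinPosList (n : ℕ) (π : ℕ → ℕ) : List ℕ :=
  ((Finset.Icc 1 n).filter fun i => π (i - 1) < π i ∧ π (i + 1) < π i).sort (· ≤ ·)

/-- The positions of the dells of `π`, from left to right. -/
def dellPosList (n : ℕ) (π : ℕ → ℕ) : List ℕ :=
  ((Finset.Icc 1 n).filter fun i => π i < π (i - 1) ∧ π i < π (i + 1)).sort (· ≤ ·)

/-- The pinnacles `y_1, …, y_p` of `π`, from left to right. -/
def pinList (n : ℕ) (π : ℕ → ℕ) : List ℕ := (pinPosList n π).map π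

/-- The dells `v_1, …, v_{p+1}` of `π`, from left to right. -/
def dellList (n : ℕ) (π : ℕ → ℕ) : List ℕ := (dellPosList n π).map π

/-- The position of the dell `v q` (dells are indexed from `1`). -/
def vPos (n : ℕ) (π : ℕ → ℕ) (q : ℕ) : ℕ := (dellPosList n π).getD (q - 1) 0

/-- The dell `v q`. -/
def vVal (n : ℕ) (π : ℕ → ℕ) (q : ℕ) : ℕ := π (vPos n π q)

/-- The position of the pinnacle `y q`, where `y 0` is at position `0` and
`y (p+1)` is at position `n+1`. -/
def yPos (n : ℕ) (π : ℕ → ℕ) (q : ℕ) : ℕ :=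
  if q = 0 then 0 else (pinPosList n π).getD (q - 1) (n + 1)

/-- The pinnacle `y q`, where `y 0 = π 0 = n+1` and `y (p+1) = π (n+1) = n+2`. -/
def yVal (n : ℕ) (π : ℕ → ℕ) (q : ℕ) : ℕ := π (yPos n π q)

/-- The elements of `π` at positions `1, …, n`, read from left to right. -/
def toList (n : ℕ) (π : ℕ → ℕ) : List ℕ := (List.range n).map fun i => π (i + 1)

/-- The cutpoint `cutA_π(z, v_q, y_q)`: the largest element `e` of
`A_π(v_q, y_q) ∪ {v_q}` such that `e < z`. -/
noncomputable def cutA (n : ℕ) (π : ℕ → ℕ) (q z : ℕ) : ℕ :=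
  sSup ((insert (vVal n π q) (π '' Set.Ioo (vPos n π q) (yPos n π q))) ∩ Set.Iio z)

/-- The cutpoint `cutD_π(z, y_{q-1}, v_q)`: the largest element `e` of
`D_π(y_{q-1}, v_q) ∪ {v_q}` such that `e < z`. -/
noncomputable def cutD (n : ℕ) (π : ℕ → ℕ) (q z : ℕ) : ℕ :=
  sSup ((insert (vVal n π q) (π '' Set.Ioo (yPos n π (q - 1)) (vPos n π q))) ∩ Set.Iio z)

/-- The canonical permutation `Id_S ∈ S_n` (extended by its boundary values):
the elements of `S` in increasing order at positions `2, 4, …, 2|S|`, and the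
elements of `{1,…,n} \ S` in increasing order at the remaining positions. -/
def canon (n : ℕ) (S : Finset ℕ) : ℕ → ℕ := fun i =>
  if i = 0 then n + 1
  else if i = n + 1 then n + 2
  else if i ≤ 2 * S.card ∧ i % 2 = 0 then (S.sort (· ≤ ·)).getD (i / 2 - 1) 0
  else if i ≤ 2 * S.card then (((Finset.Icc 1 n) \ S).sort (· ≤ ·)).getD ((i - 1) / 2) 0
  else (((Finset.Icc 1 n) \ S).sort (· ≤ ·)).getD (i - S.card - 1) 0


/-!
Let `y` be a pinnacle of `π` and `k` the number of pinnacles `≤ y`. These pinnacles, their right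
neighbours and the left neighbour of the leftmost one are `2k + 1` distinct values `≤ y`, so the
`k`-th smallest pinnacle is at least `2k + 1`. Consequently more than `k` non-pinnacle values lie
below it, and in `Id_S` the entries at the odd positions next to it are smaller, while the
non-pinnacle values after position `2|S|` increase up to the boundary value `n + 2`. So the
pinnacles of `Id_S` are exactly its entries at the positions `2, 4, …, 2|S|`.

`Nat.nth (· ∈ s) k` is the `k`-th smallest element of `s` counting from `0`; it sits at
position `2k + 2` of `Id_S`.
-/

open Finset

namespace Finset

lemma finite_ofPred_mem (s : Finset ℕ) : (Set.ofPred (· ∈ s)).Finite := s.finite_toSet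

@[simp]
lemma toFinset_ofPred_mem (s : Finset ℕ) (hf : (Set.ofPred (· ∈ s)).Finite) : hf.toFinset = s := by
  ext
  simp

lemma sort_getD_eq_nth (s : Finset ℕ) (i : ℕ) :
    (s.sort (· ≤ ·)).getD i 0 = Nat.nth (· ∈ s) i := by
  rw [Nat.nth_eq_getD_sort s.finite_ofPred_mem]
  simp

lemma count_mem_eq_card_filter_lt (s : Finset ℕ) (x : ℕ) :
    Nat.count (· ∈ s) x = #{a ∈ s | a < x} := by
  rw [Nat.count_eq_card_filter_range]
  congr 1
  ext
  simp [and_comm]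

variable {s : Finset ℕ} {k : ℕ}

lemma nth_mem_of_lt_card (hk : k < #s) : Nat.nth (· ∈ s) k ∈ s :=
  Nat.nth_mem_of_lt_card s.finite_ofPred_mem (by simpa)

lemma nth_lt_nth_of_lt_card {l : ℕ} (hkl : k < l) (hl : l < #s) :
    Nat.nth (· ∈ s) k < Nat.nth (· ∈ s) l :=
  Nat.nth_lt_nth_of_lt_card s.finite_ofPred_mem hkl (by simpa)

lemma count_nth_of_lt_card (hk : k < #s) : Nat.count (· ∈ s) (Nat.nth (· ∈ s) k) = k :=
  Nat.count_nth_of_lt_card_finite s.finite_ofPred_mem (by simpa)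

lemma count_nth_succ_of_lt_card (hk : k < #s) :
    Nat.count (· ∈ s) (Nat.nth (· ∈ s) k + 1) = k + 1 :=
  Nat.count_nth_succ fun _ => by simpa

end Finset

lemma PinAt.not_pinAt_succ {π : ℕ → ℕ} {i : ℕ} (h : PinAt π i) : ¬ PinAt π (i + 1) := by
  unfold PinAt at *
  rw [Nat.add_sub_cancel]
  omega

namespace IsExtPerm

variable {n : ℕ} {π : ℕ → ℕ}

lemma apply_mem_Icc (hπ : IsExtPerm n π) {i : ℕ} (hi : i ∈ Icc 1 n) : π i ∈ Icc 1 n := by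
  simpa using hπ.1.mapsTo (by simpa using hi)

lemma injOn (hπ : IsExtPerm n π) : Set.InjOn π (Icc 1 n) := by
  simpa using hπ.1.injOn

lemma two_le_and_lt_of_pinAt (hπ : IsExtPerm n π) {i : ℕ} (hi : i ∈ Icc 1 n)
    (h : PinAt π i) : 2 ≤ i ∧ i < n := by
  have hπi := hπ.apply_mem_Icc hi
  obtain ⟨-, h0, hn⟩ := hπ
  obtain ⟨hl, hr⟩ := h
  rw [Finset.mem_Icc] at hi hπi
  constructor <;> by_contra
  · obtain rfl : i = 1 := by omega
    rw [Nat.sub_self, h0] at hl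
    omega
  · obtain rfl : i = n := by omega
    rw [hn] at hr
    omega

lemma two_mul_card_add_one_le (hπ : IsExtPerm n π) {P : Finset ℕ} {x : ℕ} (hPne : P.Nonempty)
    (hP : ∀ i ∈ P, i ∈ Icc 1 n ∧ PinAt π i ∧ π i ≤ x) : 2 * #P + 1 ≤ x := by
  set m := P.min' hPne
  have hm : m ∈ P := P.min'_mem hPne
  have hm2 : 2 ≤ m := (hπ.two_le_and_lt_of_pinAt (hP m hm).1 (hP m hm).2.1).1
  have hdisj : Disjoint P (P.image (· + 1)) := by
    simp only [disjoint_left, mem_image, not_exists, not_and]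
    rintro _ hj i hi rfl
    exact (hP i hi).2.1.not_pinAt_succ (hP _ hj).2.1
  have hm1 : m - 1 ∉ P ∪ P.image (· + 1) := by
    simp only [mem_union, mem_image, not_or, not_exists, not_and]
    refine ⟨fun h => ?_, fun i hi _ => ?_⟩
    · have := P.min'_le _ h
      omega
    · have := P.min'_le _ hi
      omega
  have hM : ∀ j ∈ insert (m - 1) (P ∪ P.image (· + 1)), j ∈ Icc 1 n ∧ π j ≤ x := by
    simp only [mem_insert, mem_union, mem_image]
    rintro j (rfl | hj | ⟨i, hi, rfl⟩)
    · obtain ⟨hmn, ⟨hl, -⟩, hmx⟩ := hP m hm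
      exact ⟨by simp only [Finset.mem_Icc] at hmn ⊢; omega, by omega⟩
    · exact ⟨(hP j hj).1, (hP j hj).2.2⟩
    · obtain ⟨hin, hpin, hix⟩ := hP i hi
      have hin' := (hπ.two_le_and_lt_of_pinAt hin hpin).2
      exact ⟨by simp only [Finset.mem_Icc] at hin ⊢; omega, by have := hpin.2; omega⟩
  calc 2 * #P + 1 = #(insert (m - 1) (P ∪ P.image (· + 1))) := by
        rw [card_insert_of_notMem hm1, card_union_of_disjoint hdisj,
          card_image_of_injective _ (add_left_injective 1)]
        ring
    _ ≤ #(Icc 1 x) := by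
        refine card_le_card_of_injOn π (fun j hj => ?_) (hπ.injOn.mono fun j hj => (hM j hj).1)
        have := hπ.apply_mem_Icc (hM j hj).1
        simp only [coe_Icc, Set.mem_Icc, Finset.mem_Icc] at this ⊢
        exact ⟨this.1, (hM j hj).2⟩
    _ = x := by simp

lemma two_mul_card_filter_le_add_one_le (hπ : IsExtPerm n π) {x : ℕ} (hx : x ∈ pinFinset n π) :
    2 * #{y ∈ pinFinset n π | y ≤ x} + 1 ≤ x := by
  set P := {i ∈ {i ∈ Icc 1 n | π (i - 1) < π i ∧ π (i + 1) < π i} | π i ≤ x}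
  have hP : ∀ i ∈ P, i ∈ Icc 1 n ∧ PinAt π i ∧ π i ≤ x := fun i hi => by
    simp only [P, mem_filter] at hi
    exact ⟨hi.1.1, hi.1.2, hi.2⟩
  rw [pinFinset, filter_image, card_image_of_injOn (hπ.injOn.mono fun i hi => (hP i hi).1)]
  obtain ⟨i, hi, rfl⟩ := mem_image.1 hx
  exact hπ.two_mul_card_add_one_le ⟨i, mem_filter.2 ⟨hi, le_rfl⟩⟩ hP

end IsExtPerm

section Canon

variable {n : ℕ} {S : Finset ℕ}

lemma canon_two_mul_add_two {k : ℕ} (hk : k < #S) (hn : 2 * #S < n) :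
    canon n S (2 * k + 2) = Nat.nth (· ∈ S) k := by
  simp only [canon]
  rw [if_neg (by omega), if_neg (by omega), if_pos (by omega), sort_getD_eq_nth]
  congr 1
  omega

lemma canon_two_mul_add_one {k : ℕ} (hk : k ≤ #S) (hn : 2 * #S < n) :
    canon n S (2 * k + 1) = Nat.nth (· ∈ Icc 1 n \ S) k := by
  simp only [canon]
  rw [if_neg (by omega), if_neg (by omega), if_neg (by omega)]
  split_ifs <;> rw [sort_getD_eq_nth] <;> congr 1 <;> omega

lemma canon_of_two_mul_card_lt {i : ℕ} (hi : 2 * #S < i) (hin : i ≤ n) :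
    canon n S i = Nat.nth (· ∈ Icc 1 n \ S) (i - #S - 1) := by
  simp only [canon]
  rw [if_neg (by omega), if_neg (by omega), if_neg (by omega), if_neg (by omega),
    sort_getD_eq_nth]

lemma card_Icc_sdiff (hSn : S ⊆ Icc 1 n) : #(Icc 1 n \ S) = n - #S := by
  rw [card_sdiff_of_subset hSn, Nat.card_Icc, Nat.add_sub_cancel]

lemma nth_sdiff_lt_nth_sdiff (hSn : S ⊆ Icc 1 n) {a b : ℕ} (hab : a < b) (hb : b < n - #S) :
    Nat.nth (· ∈ Icc 1 n \ S) a < Nat.nth (· ∈ Icc 1 n \ S) b :=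
  nth_lt_nth_of_lt_card hab (by rwa [card_Icc_sdiff hSn])

lemma nth_sdiff_le (hSn : S ⊆ Icc 1 n) {a : ℕ} (ha : a < n - #S) :
    Nat.nth (· ∈ Icc 1 n \ S) a ≤ n := by
  have := nth_mem_of_lt_card (s := Icc 1 n \ S) (by rwa [card_Icc_sdiff hSn])
  exact (Finset.mem_Icc.1 (mem_sdiff.1 this).1).2

lemma not_pinAt_canon_of_two_mul_card_add_one_lt (hSn : S ⊆ Icc 1 n) {i : ℕ}
    (hi : 2 * #S + 1 < i) (hin : i ≤ n) : ¬ PinAt (canon n S) i := by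
  rintro ⟨-, hr⟩
  rw [canon_of_two_mul_card_lt (by omega) hin] at hr
  rcases hin.lt_or_eq with hin | rfl
  · rw [canon_of_two_mul_card_lt (by omega) hin] at hr
    exact (nth_sdiff_lt_nth_sdiff hSn (by omega) (by omega)).not_gt hr
  · have := nth_sdiff_le hSn (a := i - #S - 1) (by omega)
    simp only [canon, if_neg (by omega : i + 1 ≠ 0), if_true] at hr
    omega

variable (hSn : S ⊆ Icc 1 n) (hadm : ∀ y ∈ S, 2 * #{z ∈ S | z ≤ y} + 1 ≤ y)
include hadm

lemma two_mul_add_three_le_nth {k : ℕ} (hk : k < #S) : 2 * k + 3 ≤ Nat.nth (· ∈ S) k := by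
  have hmem := nth_mem_of_lt_card hk
  have hcount : #{z ∈ S | z ≤ Nat.nth (· ∈ S) k} = k + 1 := by
    rw [← count_nth_succ_of_lt_card hk, count_mem_eq_card_filter_lt]
    simp only [Nat.lt_succ_iff]
  have := hadm _ hmem
  omega

include hSn

lemma two_mul_card_lt (hn : 0 < n) : 2 * #S < n := by
  rcases Nat.eq_zero_or_pos #S with h | h
  · omega
  · have h1 := two_mul_add_three_le_nth hadm (Nat.sub_one_lt_of_lt h)
    have h2 := hSn (nth_mem_of_lt_card (Nat.sub_one_lt_of_lt h))
    simp only [Finset.mem_Icc] at h2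
    omega

/-- Below the `k`-th element `x` of `S` lie `x - 1 ≥ 2 k + 2` values, only `k` of them in `S`. -/
lemma nth_sdiff_succ_lt_nth {k : ℕ} (hk : k < #S) :
    Nat.nth (· ∈ Icc 1 n \ S) (k + 1) < Nat.nth (· ∈ S) k := by
  apply Nat.nth_lt_of_lt_count
  set x := Nat.nth (· ∈ S) k
  have hx3 : 2 * k + 3 ≤ x := two_mul_add_three_le_nth hadm hk
  have hxn : x ≤ n := (Finset.mem_Icc.1 (hSn (nth_mem_of_lt_card hk))).2
  have hSx : #{z ∈ S | z < x} = k := by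
    rw [← count_mem_eq_card_filter_lt, count_nth_of_lt_card hk]
  have hsplit : {a ∈ Icc 1 n \ S | a < x} = Ico 1 x \ {z ∈ S | z < x} := by
    ext a
    simp only [mem_filter, mem_sdiff, Finset.mem_Icc, Finset.mem_Ico]
    constructor
    · rintro ⟨⟨⟨h1, -⟩, hS⟩, hx⟩
      exact ⟨⟨h1, hx⟩, fun h => hS h.1⟩
    · rintro ⟨⟨h1, hx⟩, hS⟩
      exact ⟨⟨⟨h1, by omega⟩, fun h => hS ⟨h, hx⟩⟩, hx⟩
  have hsub : {z ∈ S | z < x} ⊆ Ico 1 x := fun z hz => by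
    rw [mem_filter] at hz
    exact Finset.mem_Ico.2 ⟨(Finset.mem_Icc.1 (hSn hz.1)).1, hz.2⟩
  rw [count_mem_eq_card_filter_lt, hsplit, card_sdiff_of_subset hsub, Nat.card_Ico, hSx]
  omega

lemma pinAt_canon_two_mul_add_two (hn : 2 * #S < n) {k : ℕ} (hk : k < #S) :
    PinAt (canon n S) (2 * k + 2) := by
  have hkey := nth_sdiff_succ_lt_nth hSn hadm hk
  constructor
  · rw [show 2 * k + 2 - 1 = 2 * k + 1 by omega, canon_two_mul_add_one hk.le hn,
      canon_two_mul_add_two hk hn]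
    exact (nth_sdiff_lt_nth_sdiff hSn k.lt_succ_self (by omega)).trans hkey
  · rw [show 2 * k + 2 + 1 = 2 * (k + 1) + 1 by ring, canon_two_mul_add_one hk hn,
      canon_two_mul_add_two hk hn]
    exact hkey

lemma not_pinAt_canon_two_mul_add_one (hn : 2 * #S < n) {k : ℕ} (hk : k ≤ #S) :
    ¬ PinAt (canon n S) (2 * k + 1) := by
  rintro ⟨hl, -⟩
  rw [Nat.add_sub_cancel, canon_two_mul_add_one hk hn] at hl
  rcases k with _ | k
  · have := nth_sdiff_le hSn (a := 0) (by omega)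
    simp only [canon, mul_zero, if_true] at hl
    omega
  · rw [show 2 * (k + 1) = 2 * k + 2 by ring, canon_two_mul_add_two hk hn] at hl
    exact hl.not_gt (nth_sdiff_succ_lt_nth hSn hadm hk)

lemma exists_eq_two_mul_add_two_of_pinAt_canon {i : ℕ} (hi : i ∈ Icc 1 n)
    (h : PinAt (canon n S) i) : ∃ k < #S, i = 2 * k + 2 := by
  rw [Finset.mem_Icc] at hi
  have hn := two_mul_card_lt hSn hadm (by omega)
  by_cases hi' : 2 * #S + 1 < i
  · exact absurd h (not_pinAt_canon_of_two_mul_card_add_one_lt hSn hi' hi.2)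
  obtain ⟨j, rfl | rfl⟩ := Nat.even_or_odd' i
  · exact ⟨j - 1, by omega, by omega⟩
  · exact absurd h (not_pinAt_canon_two_mul_add_one hSn hadm hn (by omega))

theorem pinFinset_canon : pinFinset n (canon n S) = S := by
  ext x
  simp only [pinFinset, mem_image, mem_filter]
  constructor
  · rintro ⟨i, ⟨hi, hpin⟩, rfl⟩
    obtain ⟨k, hk, rfl⟩ := exists_eq_two_mul_add_two_of_pinAt_canon hSn hadm hi hpin
    rw [canon_two_mul_add_two hk (two_mul_card_lt hSn hadm (by have := Finset.mem_Icc.1 hi; omega))]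
    exact nth_mem_of_lt_card hk
  · intro hx
    have hn := two_mul_card_lt hSn hadm (by have := Finset.mem_Icc.1 (hSn hx); omega)
    obtain ⟨k, hk, rfl⟩ := Nat.exists_lt_card_finite_nth_eq S.finite_ofPred_mem hx
    rw [toFinset_ofPred_mem] at hk
    exact ⟨2 * k + 2, ⟨Finset.mem_Icc.2 ⟨by omega, by omega⟩,
      pinAt_canon_two_mul_add_two hSn hadm hn hk⟩, canon_two_mul_add_two hk hn⟩

end Canon

/-- If `S` is the pinnacle set of some permutation `π ∈ S_n`,
then the canonical permutation `Id_S ∈ S_n` has pinnacle set exactly `S`. -/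
theorem statement19 (n : ℕ) (π : ℕ → ℕ) (hπ : IsExtPerm n π)
    (S : Finset ℕ) (hS : S = pinFinset n π) :
    pinFinset n (canon n S) = S := by
  subst hS
  refine pinFinset_canon (fun x hx => ?_) fun y hy => hπ.two_mul_card_filter_le_add_one_le hy
  obtain ⟨i, hi, rfl⟩ := mem_image.1 hx
  exact hπ.apply_mem_Icc (mem_filter.1 hi).1
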